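/- Let Q be a probability distribution on ℝ with finite second moment, τ ∈ (0,1), and let t* be the τ-expectile of Q. Then for all t ∈ ℝ: c_τ (t - t*)² ≤ C_{L_τ,Q}(t) - C_{L_τ,Q}(t*) ≤ C_τ (t - t*)², where c_τ = min{τ, 1-τ} and C_τ = max{τ, 1-τ}. -/

import Mathlib

/-!
With `w(y, s) = 1 - τ` for `y < s` and `τ` otherwise, `∂ₜ alsLoss τ y t = -2 w(y, t) (y - t)`,
and the first-order condition says `∫ w(y, t*) (y - t*) dQ = 0`. So the excess inner risk is the
integral of the first-order Taylor remainder of `t ↦ alsLoss τ y t` at `t*`. Pointwise this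
remainder is `τ p + (1 - τ) q` with `p, q ≥ 0` and `p + q = (t - t*)²` (one of `p, q` vanishes
unless `y` lies between `t*` and `t`), hence it lies between `min τ (1 - τ) (t - t*)²` and
`max τ (1 - τ) (t - t*)²`.
-/

open MeasureTheory

noncomputable def alsLoss (τ y t : ℝ) : ℝ :=
  if y < t then (1 - τ) * (y - t) ^ 2 else τ * (y - t) ^ 2

noncomputable def alsWeight (τ y t : ℝ) : ℝ :=
  if y < t then 1 - τ else τ

lemma alsLoss_eq_alsWeight_mul (τ y t : ℝ) :
    alsLoss τ y t = alsWeight τ y t * (y - t) ^ 2 := by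
  unfold alsLoss alsWeight
  split_ifs <;> rfl

lemma abs_alsWeight_le (τ y t : ℝ) : |alsWeight τ y t| ≤ max |τ| |1 - τ| := by
  unfold alsWeight
  split_ifs
  · exact le_max_right _ _
  · exact le_max_left _ _

lemma measurable_alsWeight (τ t : ℝ) : Measurable fun y => alsWeight τ y t :=
  Measurable.ite measurableSet_Iio measurable_const measurable_const

noncomputable def alsBregman (τ y s t : ℝ) : ℝ :=
  alsLoss τ y t - alsLoss τ y s + 2 * (t - s) * (alsWeight τ y s * (y - s))

lemma min_mul_add_le_mul_add_mul {a b p q : ℝ} (hp : 0 ≤ p) (hq : 0 ≤ q) :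
    min a b * (p + q) ≤ a * p + b * q := by
  nlinarith [min_le_left a b, min_le_right a b]

lemma mul_add_mul_le_max_mul_add {a b p q : ℝ} (hp : 0 ≤ p) (hq : 0 ≤ q) :
    a * p + b * q ≤ max a b * (p + q) := by
  nlinarith [le_max_left a b, le_max_right a b]

lemma exists_alsBregman_eq (τ y s t : ℝ) :
    ∃ p q : ℝ, 0 ≤ p ∧ 0 ≤ q ∧ p + q = (t - s) ^ 2 ∧
      alsBregman τ y s t = τ * p + (1 - τ) * q := by
  unfold alsBregman alsLoss alsWeight
  split_ifs with hyt hys hys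
  · exact ⟨0, (t - s) ^ 2, le_rfl, sq_nonneg _, by ring, by ring⟩
  · refine ⟨(t - s) ^ 2 - (t - y) ^ 2, (t - y) ^ 2, ?_, sq_nonneg _, by ring, by ring⟩
    nlinarith
  · refine ⟨(y - t) ^ 2, (t - s) ^ 2 - (y - t) ^ 2, sq_nonneg _, ?_, by ring, by ring⟩
    nlinarith
  · exact ⟨(t - s) ^ 2, 0, sq_nonneg _, le_rfl, by ring, by ring⟩

lemma alsBregman_mem_Icc (τ y s t : ℝ) :
    alsBregman τ y s t ∈
      Set.Icc (min τ (1 - τ) * (t - s) ^ 2) (max τ (1 - τ) * (t - s) ^ 2) := by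
  obtain ⟨p, q, hp, hq, hpq, hD⟩ := exists_alsBregman_eq τ y s t
  rw [hD, ← hpq]
  exact ⟨min_mul_add_le_mul_add_mul hp hq, mul_add_mul_le_max_mul_add hp hq⟩

section Integrals

variable {μ : Measure ℝ}

lemma MeasureTheory.Integrable.alsWeight_mul {f : ℝ → ℝ} (hf : Integrable f μ) (τ s : ℝ) :
    Integrable (fun y => alsWeight τ y s * f y) μ :=
  hf.bdd_mul (measurable_alsWeight τ s).aestronglyMeasurable
    (ae_of_all _ fun y => abs_alsWeight_le τ y s)

lemma integral_alsWeight_mul_sub {s : ℝ} (hs : Integrable (fun y => y - s) μ) (τ : ℝ) :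
    ∫ y, alsWeight τ y s * (y - s) ∂μ
      = τ * ∫ y in Set.Ici s, (y - s) ∂μ - (1 - τ) * ∫ y in Set.Iio s, (s - y) ∂μ := by
  rw [← integral_add_compl measurableSet_Iio (hs.alsWeight_mul τ s), Set.compl_Iio,
    setIntegral_congr_fun measurableSet_Iio fun y (hy : y < s) => by
      rw [alsWeight, if_pos hy, ← neg_sub s y, mul_neg],
    setIntegral_congr_fun measurableSet_Ici fun y (hy : s ≤ y) => by
      rw [alsWeight, if_neg hy.not_gt],
    integral_neg, integral_const_mul, integral_const_mul]
  ring

variable [IsFiniteMeasure μ] (hμ : MemLp (fun y : ℝ => y) 2 μ) (τ : ℝ)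
include hμ

lemma integrable_sub_const_of_memLp_two (s : ℝ) : Integrable (fun y : ℝ => y - s) μ :=
  (hμ.sub (memLp_const s)).integrable one_le_two

lemma integrable_alsLoss (t : ℝ) : Integrable (fun y => alsLoss τ y t) μ := by
  simp only [alsLoss_eq_alsWeight_mul]
  exact (hμ.sub (memLp_const t)).integrable_sq.alsWeight_mul τ t

lemma integral_alsBregman (s t : ℝ) :
    ∫ y, alsBregman τ y s t ∂μ = (∫ y, alsLoss τ y t ∂μ) - (∫ y, alsLoss τ y s ∂μ)
      + 2 * (t - s) * ∫ y, alsWeight τ y s * (y - s) ∂μ := by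
  have hLt := integrable_alsLoss hμ τ t
  have hLs := integrable_alsLoss hμ τ s
  have hsub : Integrable (fun y => alsLoss τ y t - alsLoss τ y s) μ := hLt.sub hLs
  have hshift := (integrable_sub_const_of_memLp_two hμ s).alsWeight_mul τ s
  rw [← integral_const_mul, ← integral_sub hLt hLs, ← integral_add hsub (hshift.const_mul _)]
  rfl

lemma integrable_alsBregman (s t : ℝ) : Integrable (fun y => alsBregman τ y s t) μ :=
  ((integrable_alsLoss hμ τ t).sub (integrable_alsLoss hμ τ s)).add
    (((integrable_sub_const_of_memLp_two hμ s).alsWeight_mul τ s).const_mul _)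

end Integrals

theorem excess_inner_risk_bounds_general (Q : Measure ℝ) [IsProbabilityMeasure Q]
    (hQ2 : Integrable (fun y : ℝ => y ^ 2) Q)
    (τ : ℝ) (tstar : ℝ)
    (hfoc : τ * ∫ y in Set.Ici tstar, (y - tstar) ∂Q
      = (1 - τ) * ∫ y in Set.Iio tstar, (tstar - y) ∂Q) :
    ∀ t : ℝ,
      min τ (1 - τ) * (t - tstar) ^ 2
          ≤ (∫ y, alsLoss τ y t ∂Q) - (∫ y, alsLoss τ y tstar ∂Q)
      ∧ (∫ y, alsLoss τ y t ∂Q) - (∫ y, alsLoss τ y tstar ∂Q)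
          ≤ max τ (1 - τ) * (t - tstar) ^ 2 := by
  intro t
  have hmem : MemLp (fun y : ℝ => y) 2 Q :=
    (memLp_two_iff_integrable_sq aestronglyMeasurable_id).mpr hQ2
  have hfoc' : ∫ y, alsWeight τ y tstar * (y - tstar) ∂Q = 0 := by
    rw [integral_alsWeight_mul_sub (integrable_sub_const_of_memLp_two hmem tstar), hfoc, sub_self]
  have hexcess : (∫ y, alsLoss τ y t ∂Q) - (∫ y, alsLoss τ y tstar ∂Q)
      = ∫ y, alsBregman τ y tstar t ∂Q := by
    rw [integral_alsBregman hmem, hfoc', mul_zero, add_zero]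
  have hint := integrable_alsBregman hmem τ tstar t
  rw [hexcess]
  have hbound := fun y => alsBregman_mem_Icc τ y tstar t
  constructor
  · simpa using integral_mono (integrable_const _) hint fun y => (hbound y).1
  · simpa using integral_mono hint (integrable_const _) fun y => (hbound y).2

theorem excess_inner_risk_bounds (Q : Measure ℝ) [IsProbabilityMeasure Q]
    (hQ2 : Integrable (fun y : ℝ => y ^ 2) Q)
    (τ : ℝ) (hτ : τ ∈ Set.Ioo (0 : ℝ) 1) (tstar : ℝ)
    (hfoc : τ * ∫ y in Set.Ici tstar, (y - tstar) ∂Q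
      = (1 - τ) * ∫ y in Set.Iio tstar, (tstar - y) ∂Q) :
    ∀ t : ℝ,
      min τ (1 - τ) * (t - tstar) ^ 2
          ≤ (∫ y, alsLoss τ y t ∂Q) - (∫ y, alsLoss τ y tstar ∂Q)
      ∧ (∫ y, alsLoss τ y t ∂Q) - (∫ y, alsLoss τ y tstar ∂Q)
          ≤ max τ (1 - τ) * (t - tstar) ^ 2 :=
  excess_inner_risk_bounds_general Q hQ2 τ tstar hfoc
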